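/- arXiv:1902.03903 — 2 statements merged into one kernel-verified Lean document; each statement's English description precedes it below -/
import Mathlib

section
/- Let N ≥ 3 be odd, β ∈ ℝ, m = (N−1)/2, and ω_k = √(1 + 4 sin²(kπ/N)). Then the N functions a_1, …, a_m, b_1, …, b_m, a_N on ℝ^{2N} pairwise Poisson-commute, and each of them Poisson-commutes with the truncated normal form H̄ = H₂ + H̄₄, where H₂ = Σ_{k=1}^N (ω_k/2)(Q_k² + P_k²) and H̄₄ = (β/(2N)) [ (3/4) Σ_{k=1}^m (3a_k² − b_k²)/ω_k² + (3/2) a_N²/ω_N² + 6 (a_N/ω_N) Σ_{k=1}^m a_k/ω_k + 6 Σ_{1≤k<l≤m} a_k a_l/(ω_k ω_l) ]. Hence the truncated fourth-order normal form of the periodic KG lattice with N odd is Liouville integrable with quadratic first integrals. -/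
noncomputable section

open Finset

/-- The Poisson bracket on `ℝ^{2N}` with coordinates `(Q, P)`:
`{f,g} = Σ_k (∂f/∂Q_k ∂g/∂P_k − ∂f/∂P_k ∂g/∂Q_k)`. -/
def pb {N : ℕ} (f g : ((Fin N → ℝ) × (Fin N → ℝ)) → ℝ)
    (x : (Fin N → ℝ) × (Fin N → ℝ)) : ℝ :=
  ∑ k : Fin N,
    (fderiv ℝ f x (Pi.single k (1 : ℝ), 0) * fderiv ℝ g x (0, Pi.single k (1 : ℝ))
      - fderiv ℝ f x (0, Pi.single k (1 : ℝ)) * fderiv ℝ g x (Pi.single k (1 : ℝ), 0))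

/-- The coordinate with (1-based) label `j` is the component `(j−1) mod N` of `Fin N`. -/
def co (N : ℕ) (hN : 0 < N) (j : ℕ) : Fin N := ⟨(j - 1) % N, Nat.mod_lt _ hN⟩

/-- Hopf variable `a_k = ½(Q_k² + P_k² + Q_{N−k}² + P_{N−k}²)`. -/
def aH (N : ℕ) (hN : 0 < N) (k : ℕ) (x : (Fin N → ℝ) × (Fin N → ℝ)) : ℝ :=
  (x.1 (co N hN k) ^ 2 + x.2 (co N hN k) ^ 2
    + x.1 (co N hN (N - k)) ^ 2 + x.2 (co N hN (N - k)) ^ 2) / 2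

/-- Hopf variable `b_k = Q_k P_{N−k} − Q_{N−k} P_k`. -/
def bH (N : ℕ) (hN : 0 < N) (k : ℕ) (x : (Fin N → ℝ) × (Fin N → ℝ)) : ℝ :=
  x.1 (co N hN k) * x.2 (co N hN (N - k)) - x.1 (co N hN (N - k)) * x.2 (co N hN k)

/-- `a_N = ½(Q_N² + P_N²)`. -/
def aNf (N : ℕ) (hN : 0 < N) (x : (Fin N → ℝ) × (Fin N → ℝ)) : ℝ :=
  (x.1 (co N hN N) ^ 2 + x.2 (co N hN N) ^ 2) / 2

/-- The normal-mode frequencies `ω_k = √(1 + 4 sin²(kπ/N))` (note `ω_N = 1`). -/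
def omg (N k : ℕ) : ℝ := Real.sqrt (1 + 4 * Real.sin (k * Real.pi / N) ^ 2)

/-- The quadratic part `H₂ = Σ_{k=1}^N (ω_k/2)(Q_k² + P_k²)`. -/
def H2KG (N : ℕ) (hN : 0 < N) (x : (Fin N → ℝ) × (Fin N → ℝ)) : ℝ :=
  ∑ k ∈ Finset.Icc 1 N, omg N k / 2 * (x.1 (co N hN k) ^ 2 + x.2 (co N hN k) ^ 2)

/-- The fourth order part `H̄₄` of the normal form of the periodic KG lattice, `N` odd:
`H̄₄ = (β/(2N)) [ (3/4) Σ_{k=1}^{(N−1)/2} (3a_k² − b_k²)/ω_k² + (3/2) a_N²/ω_N²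
+ 6 (a_N/ω_N) Σ_{k=1}^{(N−1)/2} a_k/ω_k + 6 Σ_{1≤k<l≤(N−1)/2} a_k a_l/(ω_k ω_l) ]`. -/
def H4odd (N : ℕ) (hN : 0 < N) (β : ℝ) (x : (Fin N → ℝ) × (Fin N → ℝ)) : ℝ :=
  β / (2 * N) *
    ((3 / 4) * ∑ k ∈ Finset.Icc 1 ((N - 1) / 2),
        (3 * aH N hN k x ^ 2 - bH N hN k x ^ 2) / omg N k ^ 2
      + (3 / 2) * aNf N hN x ^ 2 / omg N N ^ 2
      + 6 * (aNf N hN x / omg N N) * ∑ k ∈ Finset.Icc 1 ((N - 1) / 2), aH N hN k x / omg N k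
      + 6 * ∑ k ∈ Finset.Icc 1 ((N - 1) / 2), ∑ l ∈ Finset.Icc (k + 1) ((N - 1) / 2),
          aH N hN k x * aH N hN l x / (omg N k * omg N l))

/-! The Hopf variables `a_k`, `a_N` and the quadratic part `H₂` are all diagonal quadratic
Hamiltonians `Σ_u w_u (Q_u² + P_u²)/2`. Their symplectic gradients rotate each mode plane
`(Q_u, P_u)` separately, which preserves every `Q_u² + P_u²`, so any two of them commute. The
variable `b_k` generates a simultaneous rotation of `(Q_k, Q_{N−k})` and `(P_k, P_{N−k})`: it fixes
all other coordinates and preserves `Q_k² + P_k² + Q_{N−k}² + P_{N−k}²`, so it commutes with the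
`b_l` of disjoint pairs and with every diagonal Hamiltonian whose weights at `k` and `N − k` agree;
for `H₂` this is `ω_k = ω_{N−k}`. Finally `H̄₄` is a polynomial in the Hopf variables, so by the
Leibniz rule it commutes with whatever commutes with all of them. -/

abbrev PhaseSpace (N : ℕ) := (Fin N → ℝ) × (Fin N → ℝ)

section Bracket

variable {N : ℕ}

def symplecticGrad (f : PhaseSpace N → ℝ) (x : PhaseSpace N) : PhaseSpace N :=
  (fun r => -fderiv ℝ f x (0, Pi.single r 1), fun r => fderiv ℝ f x (Pi.single r 1, 0))

lemma pb_eq_fderiv_symplecticGrad (f g : PhaseSpace N → ℝ) (x : PhaseSpace N) :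
    pb f g x = fderiv ℝ g x (symplecticGrad f x) := by
  have hv : symplecticGrad f x = ∑ r, ((symplecticGrad f x).1 r • (Pi.single r 1, 0)
      + (symplecticGrad f x).2 r • (0, Pi.single r 1)) := by
    ext r <;> simp [Prod.fst_sum, Prod.snd_sum, Finset.sum_apply, Pi.single_apply]
  rw [hv, map_sum, pb]
  refine sum_congr rfl fun r _ => ?_
  simp only [map_add, map_smul, smul_eq_mul, symplecticGrad]
  ring

lemma pb_self (f : PhaseSpace N → ℝ) (x : PhaseSpace N) : pb f f x = 0 :=
  sum_eq_zero fun _ _ => by ring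

lemma pb_antisymm (f g : PhaseSpace N → ℝ) (x : PhaseSpace N) : pb g f x = -pb f g x := by
  simp only [pb, ← sum_neg_distrib]
  exact sum_congr rfl fun _ _ => by ring

section Leibniz

variable {f g h : PhaseSpace N → ℝ} {x : PhaseSpace N}

lemma pb_add_right (hg : DifferentiableAt ℝ g x) (hh : DifferentiableAt ℝ h x) :
    pb f (fun y => g y + h y) x = pb f g x + pb f h x := by
  simp only [pb_eq_fderiv_symplecticGrad, fderiv_fun_add hg hh, add_apply]

lemma pb_sub_right (hg : DifferentiableAt ℝ g x) (hh : DifferentiableAt ℝ h x) :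
    pb f (fun y => g y - h y) x = pb f g x - pb f h x := by
  simp only [pb_eq_fderiv_symplecticGrad, fderiv_fun_sub hg hh, sub_apply]

lemma pb_mul_right (hg : DifferentiableAt ℝ g x) (hh : DifferentiableAt ℝ h x) :
    pb f (fun y => g y * h y) x = g x * pb f h x + h x * pb f g x := by
  simp only [pb_eq_fderiv_symplecticGrad, fderiv_fun_mul hg hh, add_apply, smul_apply,
    smul_eq_mul]

lemma pb_const_mul_right (c : ℝ) (hg : DifferentiableAt ℝ g x) :
    pb f (fun y => c * g y) x = c * pb f g x := by
  simp only [pb_eq_fderiv_symplecticGrad, fderiv_const_mul hg, smul_apply, smul_eq_mul]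

lemma pb_div_const_right (c : ℝ) (hg : DifferentiableAt ℝ g x) :
    pb f (fun y => g y / c) x = pb f g x / c := by
  simp only [div_eq_mul_inv, pb_eq_fderiv_symplecticGrad, fderiv_mul_const hg, smul_apply,
    smul_eq_mul, mul_comm]

lemma pb_sq_right (hg : DifferentiableAt ℝ g x) :
    pb f (fun y => g y ^ 2) x = 2 * g x * pb f g x := by
  simp only [sq, pb_mul_right hg hg]
  ring

lemma pb_sum_right {ι : Type*} (s : Finset ι) (g : ι → PhaseSpace N → ℝ)
    (hg : ∀ t ∈ s, DifferentiableAt ℝ (g t) x) :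
    pb f (fun y => ∑ t ∈ s, g t y) x = ∑ t ∈ s, pb f (g t) x := by
  simp only [pb_eq_fderiv_symplecticGrad, fderiv_fun_sum hg, _root_.sum_apply]

end Leibniz

@[simp] lemma fderiv_coordQ_apply (i : Fin N) (x v : PhaseSpace N) :
    fderiv ℝ (fun y : PhaseSpace N => y.1 i) x v = v.1 i := by
  rw [show (fun y : PhaseSpace N => y.1 i)
    = (ContinuousLinearMap.proj i).comp (ContinuousLinearMap.fst ℝ _ _) from rfl,
    ContinuousLinearMap.fderiv]
  rfl

@[simp] lemma fderiv_coordP_apply (i : Fin N) (x v : PhaseSpace N) :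
    fderiv ℝ (fun y : PhaseSpace N => y.2 i) x v = v.2 i := by
  rw [show (fun y : PhaseSpace N => y.2 i)
    = (ContinuousLinearMap.proj i).comp (ContinuousLinearMap.snd ℝ _ _) from rfl,
    ContinuousLinearMap.fderiv]
  rfl

def diagHam (w : Fin N → ℝ) (y : PhaseSpace N) : ℝ := ∑ u, w u / 2 * (y.1 u ^ 2 + y.2 u ^ 2)

def angMom (i j : Fin N) (y : PhaseSpace N) : ℝ := y.1 i * y.2 j - y.1 j * y.2 i

lemma diagHam_add (w w' : Fin N → ℝ) (y : PhaseSpace N) :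
    diagHam (w + w') y = diagHam w y + diagHam w' y := by
  simp only [diagHam, Pi.add_apply, add_div, add_mul, sum_add_distrib]

lemma diagHam_single (i : Fin N) (c : ℝ) (y : PhaseSpace N) :
    diagHam (Pi.single i c) y = c / 2 * (y.1 i ^ 2 + y.2 i ^ 2) := by
  rw [diagHam, sum_eq_single i (fun u _ hu => by simp [hu]) (by simp)]
  simp

lemma fderiv_diagHam_apply (w : Fin N → ℝ) (x v : PhaseSpace N) :
    fderiv ℝ (diagHam w) x v = ∑ u, w u * (x.1 u * v.1 u + x.2 u * v.2 u) := by
  unfold diagHam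
  simp (disch := fun_prop) [fderiv_fun_sum, fderiv_const_mul, fderiv_fun_add, fderiv_fun_pow]
  exact sum_congr rfl fun _ _ => by ring

lemma fderiv_angMom_apply (i j : Fin N) (x v : PhaseSpace N) :
    fderiv ℝ (angMom i j) x v
      = v.1 i * x.2 j + x.1 i * v.2 j - (v.1 j * x.2 i + x.1 j * v.2 i) := by
  unfold angMom
  simp (disch := fun_prop) [fderiv_fun_sub, fderiv_fun_mul]
  ring

lemma symplecticGrad_diagHam (w : Fin N → ℝ) (x : PhaseSpace N) :
    symplecticGrad (diagHam w) x = (fun u => -(w u * x.2 u), fun u => w u * x.1 u) := by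
  ext r <;> simp [symplecticGrad, fderiv_diagHam_apply, Pi.single_apply]

lemma symplecticGrad_angMom (i j : Fin N) (x : PhaseSpace N) :
    symplecticGrad (angMom i j) x
      = (Pi.single i (x.1 j) - Pi.single j (x.1 i), Pi.single i (x.2 j) - Pi.single j (x.2 i)) := by
  ext r <;> simp [symplecticGrad, fderiv_angMom_apply, Pi.single_apply]
    <;> simp only [eq_comm (a := i), eq_comm (a := j)]

lemma pb_diagHam_diagHam_eq_zero (w w' : Fin N → ℝ) (x : PhaseSpace N) :
    pb (diagHam w) (diagHam w') x = 0 := by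
  rw [pb_eq_fderiv_symplecticGrad, symplecticGrad_diagHam, fderiv_diagHam_apply]
  exact sum_eq_zero fun _ _ => by ring

lemma pb_angMom_diagHam_eq_zero {i j : Fin N} {w : Fin N → ℝ} (hw : w i = w j)
    (x : PhaseSpace N) : pb (angMom i j) (diagHam w) x = 0 := by
  rw [pb_eq_fderiv_symplecticGrad, symplecticGrad_angMom, fderiv_diagHam_apply]
  simp [Pi.single_apply, mul_sub, mul_add, sum_add_distrib, sum_sub_distrib, hw]
  ring

lemma pb_angMom_angMom_eq_zero {i j k l : Fin N} (hik : i ≠ k) (hil : i ≠ l) (hjk : j ≠ k)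
    (hjl : j ≠ l) (x : PhaseSpace N) : pb (angMom i j) (angMom k l) x = 0 := by
  rw [pb_eq_fderiv_symplecticGrad, symplecticGrad_angMom, fderiv_angMom_apply]
  simp [hik.symm, hil.symm, hjk.symm, hjl.symm]

end Bracket

lemma omg_sub {N k : ℕ} (hk : k ≤ N) : omg N (N - k) = omg N k := by
  rcases Nat.eq_zero_or_pos N with rfl | hN
  · rw [Nat.le_zero.mp hk]
  have : ((N - k : ℕ) : ℝ) * Real.pi / N = Real.pi - k * Real.pi / N := by
    rw [Nat.cast_sub hk]
    field_simp
  rw [omg, omg, this, Real.sin_pi_sub]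

section Hopf

variable {N : ℕ} (hN : 0 < N)

lemma co_val {a : ℕ} (ha : a ≤ N) : (co N hN a : ℕ) = a - 1 :=
  Nat.mod_eq_of_lt (by omega)

lemma co_ne_co {a b : ℕ} (ha : a ≤ N) (hb : b ≤ N) (hab : a - 1 ≠ b - 1) :
    co N hN a ≠ co N hN b := by
  rwa [Ne, Fin.ext_iff, co_val hN ha, co_val hN hb]

lemma aH_eq_diagHam (k : ℕ) :
    aH N hN k = diagHam (Pi.single (co N hN k) 1 + Pi.single (co N hN (N - k)) 1) := by
  funext y
  rw [diagHam_add, diagHam_single, diagHam_single, aH]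
  ring

lemma aNf_eq_diagHam : aNf N hN = diagHam (Pi.single (co N hN N) 1) := by
  funext y
  rw [diagHam_single, aNf]
  ring

lemma bH_eq_angMom (k : ℕ) : bH N hN k = angMom (co N hN k) (co N hN (N - k)) := rfl

lemma H2KG_eq_diagHam : H2KG N hN = diagHam (fun u => omg N (u + 1)) := by
  funext y
  refine sum_nbij' (co N hN) (fun u => u + 1) (by simp) (by simp) ?_ ?_ ?_
  · intro a ha
    rw [mem_Icc] at ha
    rw [co_val hN ha.2]
    omega
  · intro u _
    ext
    rw [co_val hN (by omega)]
    simp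
  · intro a ha
    rw [mem_Icc] at ha
    dsimp only
    rw [co_val hN ha.2, Nat.sub_add_cancel ha.1]

@[fun_prop] lemma differentiable_aH (k : ℕ) : Differentiable ℝ (aH N hN k) := by
  unfold aH; fun_prop

@[fun_prop] lemma differentiable_bH (k : ℕ) : Differentiable ℝ (bH N hN k) := by
  unfold bH; fun_prop

@[fun_prop] lemma differentiable_aNf : Differentiable ℝ (aNf N hN) := by
  unfold aNf; fun_prop

@[fun_prop] lemma differentiable_H2KG : Differentiable ℝ (H2KG N hN) := by
  unfold H2KG; fun_prop

@[fun_prop] lemma differentiable_H4odd (β : ℝ) : Differentiable ℝ (H4odd N hN β) := by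
  unfold H4odd; fun_prop

variable {hN} {k l : ℕ} (x : PhaseSpace N)

lemma pb_aH_aH_eq_zero : pb (aH N hN k) (aH N hN l) x = 0 := by
  rw [aH_eq_diagHam, aH_eq_diagHam, pb_diagHam_diagHam_eq_zero]

lemma pb_aH_aNf_eq_zero : pb (aH N hN k) (aNf N hN) x = 0 := by
  rw [aH_eq_diagHam, aNf_eq_diagHam, pb_diagHam_diagHam_eq_zero]

lemma pb_aNf_aH_eq_zero : pb (aNf N hN) (aH N hN l) x = 0 := by
  rw [aH_eq_diagHam, aNf_eq_diagHam, pb_diagHam_diagHam_eq_zero]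

lemma pb_aH_H2KG_eq_zero : pb (aH N hN k) (H2KG N hN) x = 0 := by
  rw [aH_eq_diagHam, H2KG_eq_diagHam, pb_diagHam_diagHam_eq_zero]

lemma pb_aNf_H2KG_eq_zero : pb (aNf N hN) (H2KG N hN) x = 0 := by
  rw [aNf_eq_diagHam, H2KG_eq_diagHam, pb_diagHam_diagHam_eq_zero]

lemma pb_bH_aNf_eq_zero (hk₁ : 1 ≤ k) (hk : k ≤ (N - 1) / 2) :
    pb (bH N hN k) (aNf N hN) x = 0 := by
  rw [bH_eq_angMom, aNf_eq_diagHam]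
  refine pb_angMom_diagHam_eq_zero ?_ x
  simp only [Pi.single_apply, Fin.ext_iff, co_val hN le_rfl, co_val hN (show k ≤ N by omega),
    co_val hN (show N - k ≤ N by omega)]
  split_ifs <;> first | rfl | omega

lemma pb_aNf_bH_eq_zero (hk₁ : 1 ≤ k) (hk : k ≤ (N - 1) / 2) :
    pb (aNf N hN) (bH N hN k) x = 0 := by
  rw [pb_antisymm, pb_bH_aNf_eq_zero x hk₁ hk, neg_zero]

lemma pb_bH_H2KG_eq_zero (hk₁ : 1 ≤ k) (hk : k ≤ (N - 1) / 2) :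
    pb (bH N hN k) (H2KG N hN) x = 0 := by
  rw [bH_eq_angMom, H2KG_eq_diagHam]
  refine pb_angMom_diagHam_eq_zero ?_ x
  simp only [co_val hN (show k ≤ N by omega), co_val hN (show N - k ≤ N by omega)]
  rw [Nat.sub_add_cancel hk₁, Nat.sub_add_cancel (by omega), omg_sub (by omega)]

lemma pb_bH_aH_eq_zero (hk₁ : 1 ≤ k) (hk : k ≤ (N - 1) / 2) (hl₁ : 1 ≤ l)
    (hl : l ≤ (N - 1) / 2) : pb (bH N hN k) (aH N hN l) x = 0 := by
  rw [bH_eq_angMom, aH_eq_diagHam]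
  refine pb_angMom_diagHam_eq_zero ?_ x
  simp only [Pi.add_apply, Pi.single_apply, Fin.ext_iff, co_val hN (show k ≤ N by omega),
    co_val hN (show N - k ≤ N by omega), co_val hN (show l ≤ N by omega),
    co_val hN (show N - l ≤ N by omega)]
  split_ifs <;> first | rfl | omega | norm_num

lemma pb_aH_bH_eq_zero (hk₁ : 1 ≤ k) (hk : k ≤ (N - 1) / 2) (hl₁ : 1 ≤ l)
    (hl : l ≤ (N - 1) / 2) : pb (aH N hN k) (bH N hN l) x = 0 := by
  rw [pb_antisymm, pb_bH_aH_eq_zero x hl₁ hl hk₁ hk, neg_zero]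

lemma pb_bH_bH_eq_zero (hk₁ : 1 ≤ k) (hk : k ≤ (N - 1) / 2) (hl₁ : 1 ≤ l)
    (hl : l ≤ (N - 1) / 2) : pb (bH N hN k) (bH N hN l) x = 0 := by
  obtain rfl | hkl := eq_or_ne k l
  · exact pb_self _ x
  rw [bH_eq_angMom, bH_eq_angMom]
  refine pb_angMom_angMom_eq_zero ?_ ?_ ?_ ?_ x <;>
    exact co_ne_co hN (by omega) (by omega) (by omega)

variable {f : PhaseSpace N → ℝ}

lemma pb_H4odd_eq_zero (β : ℝ)
    (ha : ∀ l, 1 ≤ l → l ≤ (N - 1) / 2 → pb f (aH N hN l) x = 0)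
    (hb : ∀ l, 1 ≤ l → l ≤ (N - 1) / 2 → pb f (bH N hN l) x = 0)
    (haN : pb f (aNf N hN) x = 0) :
    pb f (H4odd N hN β) x = 0 := by
  unfold H4odd
  simp (disch := intros; fun_prop) only [pb_const_mul_right, pb_add_right,
    pb_sub_right, pb_mul_right, pb_div_const_right, pb_sq_right, pb_sum_right]
  have hA : ∀ l ∈ Icc 1 ((N - 1) / 2), pb f (aH N hN l) x = 0 := fun l hl =>
    ha l (mem_Icc.1 hl).1 (mem_Icc.1 hl).2
  have hB : ∀ l ∈ Icc 1 ((N - 1) / 2), pb f (bH N hN l) x = 0 := fun l hl =>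
    hb l (mem_Icc.1 hl).1 (mem_Icc.1 hl).2
  rw [sum_eq_zero fun l hl => by rw [hA l hl, hB l hl]; ring,
    sum_eq_zero fun l hl => by rw [hA l hl]; ring,
    sum_eq_zero fun k hk => sum_eq_zero fun l hl => by
      rw [hA k hk, hA l (mem_Icc.2 ⟨(Nat.le_add_left 1 k).trans (mem_Icc.1 hl).1,
        (mem_Icc.1 hl).2⟩)]
      ring,
    haN]
  ring

lemma pb_H2KG_add_H4odd_eq_zero (β : ℝ) (h₂ : pb f (H2KG N hN) x = 0)
    (ha : ∀ l, 1 ≤ l → l ≤ (N - 1) / 2 → pb f (aH N hN l) x = 0)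
    (hb : ∀ l, 1 ≤ l → l ≤ (N - 1) / 2 → pb f (bH N hN l) x = 0)
    (haN : pb f (aNf N hN) x = 0) :
    pb f (fun y => H2KG N hN y + H4odd N hN β y) x = 0 := by
  rw [pb_add_right (by fun_prop) (by fun_prop), h₂, pb_H4odd_eq_zero x β ha hb haN, add_zero]

end Hopf

theorem KG_odd_normal_form_integrable_general (N : ℕ) (hN0 : 0 < N) (β : ℝ) :
    (∀ k l, 1 ≤ k → k ≤ (N - 1) / 2 → 1 ≤ l → l ≤ (N - 1) / 2 →
      (∀ x, pb (aH N hN0 k) (aH N hN0 l) x = 0) ∧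
      (∀ x, pb (aH N hN0 k) (bH N hN0 l) x = 0) ∧
      (∀ x, pb (bH N hN0 k) (bH N hN0 l) x = 0)) ∧
    (∀ k, 1 ≤ k → k ≤ (N - 1) / 2 →
      (∀ x, pb (aH N hN0 k) (aNf N hN0) x = 0) ∧
      (∀ x, pb (bH N hN0 k) (aNf N hN0) x = 0)) ∧
    (∀ k, 1 ≤ k → k ≤ (N - 1) / 2 →
      (∀ x, pb (aH N hN0 k) (fun y => H2KG N hN0 y + H4odd N hN0 β y) x = 0) ∧
      (∀ x, pb (bH N hN0 k) (fun y => H2KG N hN0 y + H4odd N hN0 β y) x = 0)) ∧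
    (∀ x, pb (aNf N hN0) (fun y => H2KG N hN0 y + H4odd N hN0 β y) x = 0) := by
  refine ⟨fun k l hk₁ hk hl₁ hl => ⟨pb_aH_aH_eq_zero, fun x => pb_aH_bH_eq_zero x hk₁ hk hl₁ hl,
      fun x => pb_bH_bH_eq_zero x hk₁ hk hl₁ hl⟩,
    fun k hk₁ hk => ⟨pb_aH_aNf_eq_zero, fun x => pb_bH_aNf_eq_zero x hk₁ hk⟩,
    fun k hk₁ hk => ⟨fun x => ?_, fun x => ?_⟩, fun x => ?_⟩
  · exact pb_H2KG_add_H4odd_eq_zero x β (pb_aH_H2KG_eq_zero x) (fun _ _ _ => pb_aH_aH_eq_zero x)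
      (fun _ hl₁ hl => pb_aH_bH_eq_zero x hk₁ hk hl₁ hl) (pb_aH_aNf_eq_zero x)
  · exact pb_H2KG_add_H4odd_eq_zero x β (pb_bH_H2KG_eq_zero x hk₁ hk)
      (fun _ hl₁ hl => pb_bH_aH_eq_zero x hk₁ hk hl₁ hl)
      (fun _ hl₁ hl => pb_bH_bH_eq_zero x hk₁ hk hl₁ hl) (pb_bH_aNf_eq_zero x hk₁ hk)
  · exact pb_H2KG_add_H4odd_eq_zero x β (pb_aNf_H2KG_eq_zero x) (fun _ _ _ => pb_aNf_aH_eq_zero x)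
      (fun _ hl₁ hl => pb_aNf_bH_eq_zero x hl₁ hl) (pb_self _ x)

/-- For `N ≥ 3` odd and `m = (N−1)/2`, the `N` quadratic functions
`a_1, …, a_m, b_1, …, b_m, a_N` pairwise Poisson-commute and each of them
Poisson-commutes with the truncated normal form `H̄ = H₂ + H̄₄`; hence the truncated
fourth-order normal form of the periodic KG lattice with `N` odd is Liouville
integrable with quadratic first integrals. -/
theorem KG_odd_normal_form_integrable (N : ℕ) (hN : 3 ≤ N) (hodd : Odd N)
    (hN0 : 0 < N) (β : ℝ) :
    (∀ k l, 1 ≤ k → k ≤ (N - 1) / 2 → 1 ≤ l → l ≤ (N - 1) / 2 →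
      (∀ x, pb (aH N hN0 k) (aH N hN0 l) x = 0) ∧
      (∀ x, pb (aH N hN0 k) (bH N hN0 l) x = 0) ∧
      (∀ x, pb (bH N hN0 k) (bH N hN0 l) x = 0)) ∧
    (∀ k, 1 ≤ k → k ≤ (N - 1) / 2 →
      (∀ x, pb (aH N hN0 k) (aNf N hN0) x = 0) ∧
      (∀ x, pb (bH N hN0 k) (aNf N hN0) x = 0)) ∧
    (∀ k, 1 ≤ k → k ≤ (N - 1) / 2 →
      (∀ x, pb (aH N hN0 k) (fun y => H2KG N hN0 y + H4odd N hN0 β y) x = 0) ∧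
      (∀ x, pb (bH N hN0 k) (fun y => H2KG N hN0 y + H4odd N hN0 β y) x = 0)) ∧
    (∀ x, pb (aNf N hN0) (fun y => H2KG N hN0 y + H4odd N hN0 β y) x = 0) :=
  KG_odd_normal_form_integrable_general N hN0 β
end
end

section
/- Let N ≥ 1 and let λ_1, …, λ_N be nonzero real numbers. Then the N×N symmetric matrix A with entries A_{ij} = λ_i λ_j for i ≠ j, A_{ii} = (3/4) λ_i² for 1 ≤ i ≤ N−1, and A_{NN} = (1/2) λ_N², is invertible. -/
/-!
Writing `m_i = 1` for the last index and `m_i = 2` otherwise, the matrix is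
`diag(-λ_i² / (2 m_i)) + λ λᵀ`. By the matrix determinant lemma its determinant is
`∏ (-λ_i² / (2 m_i)) · (1 + ∑ λ_i² / (-λ_i² / (2 m_i))) = ∏ (-λ_i² / (2 m_i)) · (1 - 2 ∑ m_i)`,
and `1 - 2 ∑ m_i` is odd, hence nonzero.
-/

open Matrix Finset

theorem Matrix.det_diagonal_add_vecMulVec {ι K : Type*} [Fintype ι] [DecidableEq ι] [Field K]
    {d : ι → K} (hd : ∀ i, d i ≠ 0) (u v : ι → K) :
    (diagonal d + vecMulVec u v).det = (∏ i, d i) * (1 + ∑ i, v i * u i / d i) := by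
  have hfactor : diagonal d + vecMulVec u v = diagonal d * (1 + vecMulVec (u / d) v) := by
    ext i j
    rw [Matrix.mul_add, Matrix.mul_one, add_apply, add_apply, diagonal_mul, vecMulVec_apply,
      vecMulVec_apply, Pi.div_apply, ← mul_assoc, mul_div_cancel₀ _ (hd i)]
  rw [hfactor, det_mul, det_diagonal, vecMulVec_eq Unit, det_one_add_replicateCol_mul_replicateRow]
  simp only [dotProduct, Pi.div_apply, mul_div_assoc]

theorem Matrix.isUnit_diagonal_add_vecMulVec_self {ι K : Type*} [Fintype ι] [DecidableEq ι]
    [Field K] [CharZero K] {u : ι → K} (hu : ∀ i, u i ≠ 0) {m : ι → ℕ} (hm : ∀ i, m i ≠ 0) :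
    IsUnit (diagonal (fun i => -u i ^ 2 / (2 * m i)) + vecMulVec u u) := by
  have hd : ∀ i, -u i ^ 2 / (2 * m i) ≠ 0 := fun i =>
    div_ne_zero (neg_ne_zero.mpr (pow_ne_zero 2 (hu i))) (by simpa using hm i)
  rw [isUnit_iff_isUnit_det, isUnit_iff_ne_zero, det_diagonal_add_vecMulVec hd]
  have hterm : ∀ i, u i * u i / (-u i ^ 2 / (2 * m i)) = -2 * m i := fun i => by
    have : (m i : K) ≠ 0 := by simpa using hm i
    field_simp [hu i]
  simp only [hterm, ← mul_sum]
  refine mul_ne_zero (prod_ne_zero_iff.mpr fun i _ => hd i) ?_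
  norm_cast
  omega

theorem hessian_matrix_invertible_general (N : ℕ) (lam : Fin N → ℝ)
    (hlam : ∀ i, lam i ≠ 0) (A : Matrix (Fin N) (Fin N) ℝ)
    (hA : ∀ i j, A i j =
      if i = j then
        (if (i : ℕ) + 1 = N then (1 / 2) * lam i ^ 2 else (3 / 4) * lam i ^ 2)
      else lam i * lam j) :
    IsUnit A := by
  set m : Fin N → ℕ := fun i => if (i : ℕ) + 1 = N then 1 else 2
  have hA_decomp : A = diagonal (fun i => -lam i ^ 2 / (2 * m i)) + vecMulVec lam lam := by
    ext i j
    rw [hA, Matrix.add_apply, diagonal_apply, vecMulVec_apply]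
    rcases eq_or_ne i j with rfl | hij
    · by_cases hlast : (i : ℕ) + 1 = N <;> simp only [m, hlast, ↓reduceIte] <;> push_cast <;> ring
    · simp [hij]
  rw [hA_decomp]
  exact isUnit_diagonal_add_vecMulVec_self hlam fun i => by simp only [m]; split_ifs <;> norm_num

/-- For `N ≥ 1` and nonzero reals `λ_1, …, λ_N`, the symmetric
`N×N` matrix with off-diagonal entries `λ_i λ_j`, diagonal entries `(3/4)λ_i²`
for `i ≤ N−1` and `(1/2)λ_N²` in the last diagonal position, is invertible. -/
theorem hessian_matrix_invertible (N : ℕ) (hN : 1 ≤ N) (lam : Fin N → ℝ)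
    (hlam : ∀ i, lam i ≠ 0) (A : Matrix (Fin N) (Fin N) ℝ)
    (hA : ∀ i j, A i j =
      if i = j then
        (if (i : ℕ) + 1 = N then (1 / 2) * lam i ^ 2 else (3 / 4) * lam i ^ 2)
      else lam i * lam j) :
    IsUnit A :=
  hessian_matrix_invertible_general N lam hlam A hA
end
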